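/- arXiv:1708.04527 — 3 statements merged into one kernel-verified Lean document; each statement's English description precedes it below -/
import Mathlib

section
/- Let y ∈ ℝⁿ, X ∈ ℝ^{n×p}, λ > 0, k ∈ {0,1,…,p}, and let r be any norm on ℝ^p. Let U_k^λ = {Δ ∈ ℝ^{n×p} : Δ has at most k nonzero columns and ‖Δᵢ‖₂ ≤ λ for all i}. Then the problem min over β of (min over Δ ∈ U_k^λ of ‖y − (X + Δ)β‖₂) + r(β) has the same optimal value and the same set of optimal solutions as the constrained problem: minimize ‖y − Xβ‖₂ + r(β) − λ Σ_{i=1}^k |β_(i)| over β ∈ ℝ^p subject to λ Σ_{i=1}^k |β_(i)| ≤ ‖y − Xβ‖₂. -/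
open Finset

/-- Absolute values of the entries of `β`, sorted in increasing order. -/
noncomputable def sortAbs {p : ℕ} (β : Fin p → ℝ) : Fin p → ℝ :=
  fun i => |β (Tuple.sort (fun j => |β j|) i)|

/-- `∑_{i=1}^k |β_(i)|`: the sum of the `k` largest absolute values of entries of `β`. -/
noncomputable def topSum {p : ℕ} (k : ℕ) (β : Fin p → ℝ) : ℝ :=
  ∑ i ∈ Finset.univ.filter (fun i : Fin p => p - k ≤ (i : ℕ)), sortAbs β i

/-- The Euclidean norm of a vector. -/
noncomputable def norm2 {m : ℕ} (v : Fin m → ℝ) : ℝ := Real.sqrt (∑ i, v i ^ 2)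

/-- The uncertainty set `U_k^λ`: matrices with at most `k` nonzero columns, each
column of Euclidean norm at most `λ`. -/
noncomputable def kColBound {n p : ℕ} (k : ℕ) (lam : ℝ) : Set (Matrix (Fin n) (Fin p) ℝ) :=
  {Δ | (Finset.univ.filter (fun i : Fin p => ∃ j, Δ j i ≠ 0)).card ≤ k ∧
    ∀ i : Fin p, norm2 (fun j => Δ j i) ≤ lam}

/-- The min-min robust objective `β ↦ (min_{Δ ∈ U_k^λ} ‖y - (X+Δ)β‖₂) + r(β)`. -/
noncomputable def minminObj {n p : ℕ} (y : Fin n → ℝ) (X : Matrix (Fin n) (Fin p) ℝ)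
    (k : ℕ) (lam : ℝ) (r : (Fin p → ℝ) → ℝ) (β : Fin p → ℝ) : ℝ :=
  sInf {v : ℝ | ∃ Δ ∈ kColBound (n := n) (p := p) k lam,
    v = norm2 (y - (X + Δ).mulVec β)} + r β

/-!
For fixed `β`, the vectors `Δβ` with `Δ ∈ U_k^λ` fill exactly the Euclidean ball of radius
`λ ∑_{i ≤ k} |β_(i)|`: the bound is the triangle inequality over the at most `k` nonzero columns,
and every point `w` of the ball is reached by putting the columns `sign(β_i) w / ∑_{i ≤ k} |β_(i)|`
on the positions of the `k` largest `|β_i|`. Hence the inner minimum is the distance from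
`y - Xβ` to that ball, and the min-min objective is
`max (‖y - Xβ‖₂ - λ ∑_{i ≤ k} |β_(i)|) 0 + r β`, which agrees with the constrained objective on
the feasible set. An infeasible `β` is strictly beaten by the feasible point `tβ`, `0 ≤ t < 1`,
on the boundary of the constraint (intermediate value theorem): there the objective is
`r (tβ) = t r β < r β`, as `β ≠ 0` and `r` is a norm.
-/

lemma Finset.sum_le_sum_of_forall_le_of_card_le {ι M : Type*} [AddCommMonoid M] [LinearOrder M]
    [IsOrderedAddMonoid M] {s t : Finset ι} {f : ι → M}
    (hcard : #s ≤ #t) (hle : ∀ i ∈ s, ∀ j ∈ t, f i ≤ f j) (hnonneg : ∀ j ∈ t, 0 ≤ f j) :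
    ∑ i ∈ s, f i ≤ ∑ j ∈ t, f j := by
  rcases t.eq_empty_or_nonempty with rfl | ht
  · simp [card_eq_zero.mp (Nat.le_zero.mp hcard)]
  set m := t.inf' ht f
  calc ∑ i ∈ s, f i ≤ #s • m := sum_le_card_nsmul _ _ _ fun i hi => le_inf' ht f (hle i hi)
    _ ≤ #t • m := nsmul_le_nsmul_left (le_inf' ht f hnonneg) hcard
    _ ≤ ∑ j ∈ t, f j := card_nsmul_le_sum _ _ _ fun j hj => inf'_le f hj

lemma isLeast_norm_sub_image_closedBall {E : Type*} [NormedAddCommGroup E] [NormedSpace ℝ E]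
    (z : E) {ρ : ℝ} (hρ : 0 ≤ ρ) :
    IsLeast ((‖z - ·‖) '' Metric.closedBall 0 ρ) (max (‖z‖ - ρ) 0) := by
  refine ⟨?_, ?_⟩
  · rcases le_or_gt ‖z‖ ρ with hz | hz
    · exact ⟨z, by simpa using hz, by simp [hz]⟩
    have hz0 : 0 < ‖z‖ := hρ.trans_lt hz
    refine ⟨(ρ / ‖z‖) • z, ?_, ?_⟩
    · rw [mem_closedBall_zero_iff, norm_smul, Real.norm_eq_abs, abs_div, abs_norm,
        abs_of_nonneg hρ, div_mul_cancel₀ _ hz0.ne']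
    · have hcoef : 0 ≤ 1 - ρ / ‖z‖ := by rw [sub_nonneg, div_le_one hz0]; exact hz.le
      calc ‖z - (ρ / ‖z‖) • z‖ = ‖(1 - ρ / ‖z‖) • z‖ := by rw [sub_smul, one_smul]
        _ = (1 - ρ / ‖z‖) * ‖z‖ := by rw [norm_smul, Real.norm_of_nonneg hcoef]
        _ = max (‖z‖ - ρ) 0 := by
          rw [max_eq_left (by linarith), sub_mul, one_mul, div_mul_cancel₀ _ hz0.ne']
  · rintro _ ⟨w, hw, rfl⟩
    rw [mem_closedBall_zero_iff] at hw
    exact max_le (by linarith [norm_sub_norm_le z w]) (norm_nonneg _)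

lemma Matrix.mulVec_eq_sum_smul_col {m n R : Type*} [Fintype n] [CommSemiring R]
    (M : Matrix m n R) (v : n → R) : M.mulVec v = ∑ i, v i • fun j => M j i := by
  ext j
  simp [Matrix.mulVec, dotProduct, mul_comm]

lemma sInf_eq_sInf_of_dominated {α γ : Type*} [ConditionallyCompleteLinearOrder γ]
    {F G : α → γ} {P : α → Prop} (hFG : ∀ x, P x → F x = G x)
    (hdom : ∀ x, ¬P x → ∃ x₀, P x₀ ∧ F x₀ ≤ F x) :
    sInf {v | ∃ x, v = F x} = sInf {v | ∃ x, P x ∧ v = G x} := by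
  refine csInf_eq_csInf_of_forall_exists_le ?_ ?_
  · rintro _ ⟨x, rfl⟩
    by_cases hx : P x
    · exact ⟨G x, ⟨x, hx, rfl⟩, (hFG x hx).ge⟩
    · obtain ⟨x₀, hx₀, hle⟩ := hdom x hx
      exact ⟨G x₀, ⟨x₀, hx₀, rfl⟩, (hFG x₀ hx₀).symm.trans_le hle⟩
  · rintro _ ⟨x, hx, rfl⟩
    exact ⟨F x, ⟨x, rfl⟩, (hFG x hx).le⟩

lemma setOf_forall_le_eq_of_dominated {α γ : Type*} [Preorder γ] {F G : α → γ} {P : α → Prop}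
    (hFG : ∀ x, P x → F x = G x) (hdom : ∀ x, ¬P x → ∃ x₀, P x₀ ∧ F x₀ < F x) :
    {x | ∀ x', F x ≤ F x'} = {x | P x ∧ ∀ x', P x' → G x ≤ G x'} := by
  ext x
  constructor
  · intro hmin
    have hx : P x := by
      by_contra hx
      obtain ⟨x₀, -, hlt⟩ := hdom x hx
      exact (hmin x₀).not_gt hlt
    exact ⟨hx, fun x' hx' => by simpa only [hFG x hx, hFG x' hx'] using hmin x'⟩
  · rintro ⟨hx, hmin⟩ x'
    by_cases hx' : P x'
    · simpa only [hFG x hx, hFG x' hx'] using hmin x' hx'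
    · obtain ⟨x₀, hx₀, hlt⟩ := hdom x' hx'
      calc F x = G x := hFG x hx
        _ ≤ G x₀ := hmin x₀ hx₀
        _ = F x₀ := (hFG x₀ hx₀).symm
        _ ≤ F x' := hlt.le

section TopSum

variable {p : ℕ}

lemma Fin.card_filter_sub_le_val (k : ℕ) :
    #(univ.filter fun i : Fin p => p - k ≤ (i : ℕ)) = min k p := by
  have h := card_filter_add_card_filter_not (s := (univ : Finset (Fin p)))
    (fun i : Fin p => (i : ℕ) < p - k)
  simp only [not_lt, card_univ, Fintype.card_fin, Fin.card_filter_val_lt] at h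
  omega

lemma Monotone.sum_le_sum_filter_sub_le_val {g : Fin p → ℝ} (hg : Monotone g) (hg0 : ∀ i, 0 ≤ g i)
    {k : ℕ} {A : Finset (Fin p)} (hA : #A ≤ k) :
    ∑ i ∈ A, g i ≤ ∑ i ∈ univ.filter (fun i : Fin p => p - k ≤ (i : ℕ)), g i := by
  set S := univ.filter fun i : Fin p => p - k ≤ (i : ℕ)
  rw [← sum_sdiff_le_sum_sdiff]
  refine sum_le_sum_of_forall_le_of_card_le ?_ ?_ fun j _ => hg0 j
  · rw [card_sdiff_le_card_sdiff_iff, Fin.card_filter_sub_le_val]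
    exact le_min hA (card_le_univ A |>.trans_eq (Fintype.card_fin p))
  · intro i hi j hj
    simp only [S, mem_sdiff, mem_filter, mem_univ, true_and] at hi hj
    exact hg (Fin.le_def.mpr (by omega))

lemma exists_topSum_eq_sum_abs (k : ℕ) (β : Fin p → ℝ) :
    ∃ T : Finset (Fin p), #T ≤ k ∧ topSum k β = ∑ i ∈ T, |β i| := by
  refine ⟨(univ.filter fun i : Fin p => p - k ≤ (i : ℕ)).map
    (Tuple.sort fun j => |β j|).toEmbedding, ?_, ?_⟩
  · rw [card_map, Fin.card_filter_sub_le_val]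
    exact min_le_left k p
  · rw [sum_map]
    rfl

lemma sum_abs_le_topSum {k : ℕ} (β : Fin p → ℝ) {T : Finset (Fin p)} (hT : #T ≤ k) :
    ∑ i ∈ T, |β i| ≤ topSum k β := by
  set σ := Tuple.sort fun j => |β j|
  have hreindex : ∑ i ∈ T, |β i| = ∑ j ∈ T.map σ.symm.toEmbedding, sortAbs β j := by
    simp [sortAbs, σ]
  rw [hreindex]
  exact Monotone.sum_le_sum_filter_sub_le_val (g := sortAbs β) (Tuple.monotone_sort fun j => |β j|)
    (fun _ => abs_nonneg _) ((card_map _).trans_le hT)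

lemma topSum_nonneg (k : ℕ) (β : Fin p → ℝ) : 0 ≤ topSum k β :=
  sum_nonneg fun _ _ => abs_nonneg _

lemma topSum_smul (k : ℕ) (c : ℝ) (β : Fin p → ℝ) : topSum k (c • β) = |c| * topSum k β := by
  obtain ⟨T, hT, hTsum⟩ := exists_topSum_eq_sum_abs k (c • β)
  obtain ⟨T₀, hT₀, hT₀sum⟩ := exists_topSum_eq_sum_abs k β
  have habs (T' : Finset (Fin p)) : ∑ i ∈ T', |(c • β) i| = |c| * ∑ i ∈ T', |β i| := by
    simp [abs_mul, mul_sum]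
  apply le_antisymm
  · rw [hTsum, habs]
    exact mul_le_mul_of_nonneg_left (sum_abs_le_topSum β hT) (abs_nonneg c)
  · rw [hT₀sum, ← habs]
    exact sum_abs_le_topSum (c • β) hT₀

lemma topSum_zero (k : ℕ) : topSum k (0 : Fin p → ℝ) = 0 := by
  simpa using topSum_smul k 0 (0 : Fin p → ℝ)

end TopSum

section Norm2

variable {m : ℕ}

lemma norm2_eq_norm (v : Fin m → ℝ) : norm2 v = ‖(EuclideanSpace.equiv (Fin m) ℝ).symm v‖ := by
  rw [EuclideanSpace.norm_eq]
  simp [norm2]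

lemma norm2_nonneg (v : Fin m → ℝ) : 0 ≤ norm2 v := Real.sqrt_nonneg _

lemma norm2_smul (c : ℝ) (v : Fin m → ℝ) : norm2 (c • v) = |c| * norm2 v := by
  simp only [norm2_eq_norm, map_smul, norm_smul, Real.norm_eq_abs]

lemma norm2_eq_zero_iff {v : Fin m → ℝ} : norm2 v = 0 ↔ v = 0 := by
  simp [norm2_eq_norm]

lemma norm2_zero : norm2 (0 : Fin m → ℝ) = 0 := by
  simp [norm2_eq_norm]

lemma norm2_sum_le {ι : Type*} (s : Finset ι) (f : ι → Fin m → ℝ) :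
    norm2 (∑ i ∈ s, f i) ≤ ∑ i ∈ s, norm2 (f i) := by
  simp only [norm2_eq_norm, map_sum]
  exact norm_sum_le _ _

lemma continuous_norm2_sub_smul (y w : Fin m → ℝ) : Continuous fun t : ℝ => norm2 (y - t • w) := by
  simp only [norm2_eq_norm, map_sub, map_smul]
  fun_prop

end Norm2

section KColBound

variable {n p k : ℕ} {lam : ℝ}

lemma norm2_mulVec_le_of_mem_kColBound (hlam : 0 ≤ lam) {Δ : Matrix (Fin n) (Fin p) ℝ}
    (hΔ : Δ ∈ kColBound k lam) (β : Fin p → ℝ) : norm2 (Δ.mulVec β) ≤ lam * topSum k β := by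
  obtain ⟨hcard, hcol⟩ := hΔ
  set J := univ.filter fun i : Fin p => ∃ j, Δ j i ≠ 0
  have hzero : ∀ i ∉ J, |β i| * norm2 (fun j => Δ j i) = 0 := by
    intro i hi
    have hcol0 : (fun j => Δ j i) = 0 := funext (by simpa [J] using hi)
    rw [hcol0, norm2_zero, mul_zero]
  calc norm2 (Δ.mulVec β) ≤ ∑ i, |β i| * norm2 (fun j => Δ j i) := by
        rw [Matrix.mulVec_eq_sum_smul_col]
        simpa only [norm2_smul] using norm2_sum_le univ fun i => β i • fun j => Δ j i
    _ = ∑ i ∈ J, |β i| * norm2 (fun j => Δ j i) :=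
        (sum_subset (subset_univ J) fun i _ hi => hzero i hi).symm
    _ ≤ ∑ i ∈ J, |β i| * lam :=
        sum_le_sum fun i _ => mul_le_mul_of_nonneg_left (hcol i) (abs_nonneg _)
    _ = lam * ∑ i ∈ J, |β i| := by rw [← sum_mul, mul_comm]
    _ ≤ lam * topSum k β := mul_le_mul_of_nonneg_left (sum_abs_le_topSum β hcard) hlam

lemma exists_mem_kColBound_mulVec_eq (hlam : 0 ≤ lam) {β : Fin p → ℝ} {w : Fin n → ℝ}
    (hw : norm2 w ≤ lam * topSum k β) : ∃ Δ ∈ kColBound k lam, Δ.mulVec β = w := by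
  obtain ⟨T, hT, hTsum⟩ := exists_topSum_eq_sum_abs k β
  set S := topSum k β
  set Δ : Matrix (Fin n) (Fin p) ℝ :=
    Matrix.of fun j i => if i ∈ T then SignType.sign (β i) / S * w j else 0
  have hcol (i : Fin p) :
      (fun j => Δ j i) = if i ∈ T then (SignType.sign (β i) / S : ℝ) • w else 0 := by
    by_cases hi : i ∈ T <;> ext j <;> simp [Δ, hi]
  refine ⟨Δ, ⟨?_, fun i => ?_⟩, ?_⟩
  · refine (card_le_card fun i hi => ?_).trans hT
    by_contra hiT
    simp [Δ, hiT] at hi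
  · have hsign : |(SignType.sign (β i) : ℝ)| ≤ 1 := by
      rcases lt_trichotomy (β i) 0 with h | h | h <;> simp [h]
    rw [hcol]
    split_ifs
    · rw [norm2_smul, abs_div, abs_of_nonneg (topSum_nonneg k β), div_mul_eq_mul_div]
      exact div_le_of_le_mul₀ (topSum_nonneg k β) hlam
        (by nlinarith [norm2_nonneg w, abs_nonneg (SignType.sign (β i) : ℝ)])
    · rw [norm2_zero]; exact hlam
  · have hΔβ : Δ.mulVec β = (S / S) • w := by
      simp_rw [Matrix.mulVec_eq_sum_smul_col, hcol, smul_ite, smul_zero, smul_smul]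
      rw [sum_ite_mem, univ_inter, ← sum_smul, hTsum, sum_div]
      congr 1
      exact sum_congr rfl fun i _ => by rw [mul_div_assoc', self_mul_sign]
    rw [hΔβ]
    rcases eq_or_ne S 0 with hS | hS
    · have hw0 : norm2 w = 0 := le_antisymm (by simpa [hS] using hw) (norm2_nonneg w)
      rw [hS, div_zero, zero_smul, eq_comm, ← norm2_eq_zero_iff, hw0]
    · rw [div_self hS, one_smul]

end KColBound

section MinMin

variable {n p : ℕ} (y : Fin n → ℝ) (X : Matrix (Fin n) (Fin p) ℝ) (k : ℕ) {lam : ℝ}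

lemma sInf_norm2_sub_mulVec_kColBound (hlam : 0 ≤ lam) (z : Fin n → ℝ) (β : Fin p → ℝ) :
    sInf {v : ℝ | ∃ Δ ∈ kColBound (n := n) (p := p) k lam, v = norm2 (z - Δ.mulVec β)} =
      max (norm2 z - lam * topSum k β) 0 := by
  have hset : {v : ℝ | ∃ Δ ∈ kColBound (n := n) (p := p) k lam, v = norm2 (z - Δ.mulVec β)} =
      (‖(EuclideanSpace.equiv (Fin n) ℝ).symm z - ·‖) ''
        Metric.closedBall 0 (lam * topSum k β) := by
    ext v
    constructor
    · rintro ⟨Δ, hΔ, rfl⟩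
      refine ⟨(EuclideanSpace.equiv (Fin n) ℝ).symm (Δ.mulVec β), ?_, by simp [norm2_eq_norm]⟩
      rw [mem_closedBall_zero_iff, ← norm2_eq_norm]
      exact norm2_mulVec_le_of_mem_kColBound hlam hΔ β
    · rintro ⟨w, hw, rfl⟩
      obtain ⟨u, rfl⟩ := (EuclideanSpace.equiv (Fin n) ℝ).symm.surjective w
      rw [mem_closedBall_zero_iff, ← norm2_eq_norm] at hw
      obtain ⟨Δ, hΔ, rfl⟩ := exists_mem_kColBound_mulVec_eq hlam hw
      exact ⟨Δ, hΔ, by simp [norm2_eq_norm]⟩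
  rw [hset, norm2_eq_norm]
  exact (isLeast_norm_sub_image_closedBall _ (mul_nonneg hlam (topSum_nonneg k β))).csInf_eq

variable (r : (Fin p → ℝ) → ℝ)

lemma minminObj_eq (hlam : 0 ≤ lam) (β : Fin p → ℝ) :
    minminObj y X k lam r β = max (norm2 (y - X.mulVec β) - lam * topSum k β) 0 + r β := by
  simp only [minminObj, Matrix.add_mulVec, sub_add_eq_sub_sub]
  rw [sInf_norm2_sub_mulVec_kColBound k hlam]

lemma minminObj_eq_of_le (hlam : 0 ≤ lam) {β : Fin p → ℝ}
    (hβ : lam * topSum k β ≤ norm2 (y - X.mulVec β)) :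
    minminObj y X k lam r β = norm2 (y - X.mulVec β) + r β - lam * topSum k β := by
  rw [minminObj_eq y X k r hlam, max_eq_left (sub_nonneg.mpr hβ)]
  ring

lemma exists_lt_one_norm2_sub_mulVec_smul_eq {β : Fin p → ℝ}
    (hβ : norm2 (y - X.mulVec β) < lam * topSum k β) :
    ∃ t ∈ Set.Ico (0 : ℝ) 1, norm2 (y - X.mulVec (t • β)) = lam * topSum k (t • β) := by
  have hcont : ContinuousOn (fun t : ℝ => norm2 (y - t • X.mulVec β) - t * (lam * topSum k β))
      (Set.Icc 0 1) :=
    ((continuous_norm2_sub_smul _ _).sub (continuous_mul_const _)).continuousOn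
  obtain ⟨t, ⟨ht0, ht1⟩, ht⟩ := intermediate_value_Icc' zero_le_one hcont
    (show (0 : ℝ) ∈ Set.Icc _ _ from ⟨by simpa using hβ.le, by simpa using norm2_nonneg y⟩)
  dsimp only at ht
  replace ht : norm2 (y - X.mulVec (t • β)) = lam * topSum k (t • β) := by
    rw [Matrix.mulVec_smul, topSum_smul, abs_of_nonneg ht0]
    linarith
  refine ⟨t, ⟨ht0, ht1.lt_of_ne ?_⟩, ht⟩
  rintro rfl
  simp only [one_smul] at ht
  exact hβ.ne ht

lemma exists_minminObj_lt_of_lt (hlam : 0 ≤ lam) (hr_smul : ∀ (c : ℝ) a, r (c • a) = |c| * r a)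
    (hr_pos : ∀ a, a ≠ 0 → 0 < r a) {β : Fin p → ℝ}
    (hβ : norm2 (y - X.mulVec β) < lam * topSum k β) :
    ∃ β₀, lam * topSum k β₀ ≤ norm2 (y - X.mulVec β₀) ∧
      minminObj y X k lam r β₀ < minminObj y X k lam r β := by
  obtain ⟨t, ⟨ht0, ht1⟩, ht⟩ := exists_lt_one_norm2_sub_mulVec_smul_eq y X k hβ
  have hβ0 : β ≠ 0 := by
    rintro rfl
    simp only [topSum_zero, mul_zero] at hβ
    exact (norm2_nonneg _).not_gt hβ
  refine ⟨t • β, ht.ge, ?_⟩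
  calc minminObj y X k lam r (t • β) = t * r β := by
        rw [minminObj_eq_of_le y X k r hlam ht.ge, ht, hr_smul, abs_of_nonneg ht0]
        ring
    _ < r β := mul_lt_of_lt_one_left (hr_pos β hβ0) ht1
    _ ≤ minminObj y X k lam r β := by
        rw [minminObj_eq y X k r hlam]
        exact le_add_of_nonneg_left (le_max_right _ _)

end MinMin

theorem minmin_robust_as_constrained_general {n p : ℕ} (y : Fin n → ℝ)
    (X : Matrix (Fin n) (Fin p) ℝ) (lam : ℝ) (hlam : 0 < lam) (k : ℕ)
    (r : (Fin p → ℝ) → ℝ)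
    (hr_add : ∀ a b, r (a + b) ≤ r a + r b)
    (hr_smul : ∀ (c : ℝ) a, r (c • a) = |c| * r a)
    (hr_def : ∀ a, r a = 0 → a = 0) :
    sInf {v : ℝ | ∃ β : Fin p → ℝ, v = minminObj y X k lam r β} =
      sInf {v : ℝ | ∃ β : Fin p → ℝ,
        lam * topSum k β ≤ norm2 (y - X.mulVec β) ∧
        v = norm2 (y - X.mulVec β) + r β - lam * topSum k β} ∧
    {β : Fin p → ℝ | ∀ β' : Fin p → ℝ,
        minminObj y X k lam r β ≤ minminObj y X k lam r β'} =
      {β : Fin p → ℝ | lam * topSum k β ≤ norm2 (y - X.mulVec β) ∧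
        ∀ β' : Fin p → ℝ, lam * topSum k β' ≤ norm2 (y - X.mulVec β') →
          norm2 (y - X.mulVec β) + r β - lam * topSum k β ≤
            norm2 (y - X.mulVec β') + r β' - lam * topSum k β'} := by
  have hr_pos (a : Fin p → ℝ) (ha : a ≠ 0) : 0 < r a :=
    (apply_nonneg (Seminorm.of r hr_add hr_smul) a).lt_of_ne' (mt (hr_def a) ha)
  have hfeas (β : Fin p → ℝ) (hβ : lam * topSum k β ≤ norm2 (y - X.mulVec β)) :=
    minminObj_eq_of_le y X k r hlam.le hβ
  have hdom (β : Fin p → ℝ) (hβ : ¬lam * topSum k β ≤ norm2 (y - X.mulVec β)) :=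
    exists_minminObj_lt_of_lt y X k r hlam.le hr_smul hr_pos (not_le.mp hβ)
  exact ⟨sInf_eq_sInf_of_dominated hfeas fun β hβ => (hdom β hβ).imp fun _ h => ⟨h.1, h.2.le⟩,
    setOf_forall_le_eq_of_dominated hfeas hdom⟩

/-- Theorem 3.1: for any norm `r`, the min-min robust problem
`min_β min_{Δ ∈ U_k^λ} ‖y - (X+Δ)β‖₂ + r(β)` has the same optimal value and the
same set of optimal solutions as the constrained problem
`min ‖y - Xβ‖₂ + r(β) - λ∑_{i=1}^k |β_(i)|  s.t.  λ∑_{i=1}^k |β_(i)| ≤ ‖y - Xβ‖₂`. -/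
theorem minmin_robust_as_constrained {n p : ℕ} (y : Fin n → ℝ)
    (X : Matrix (Fin n) (Fin p) ℝ) (lam : ℝ) (hlam : 0 < lam) (k : ℕ) (hk : k ≤ p)
    (r : (Fin p → ℝ) → ℝ)
    (hr_add : ∀ a b, r (a + b) ≤ r a + r b)
    (hr_smul : ∀ (c : ℝ) a, r (c • a) = |c| * r a)
    (hr_def : ∀ a, r a = 0 → a = 0) :
    sInf {v : ℝ | ∃ β : Fin p → ℝ, v = minminObj y X k lam r β} =
      sInf {v : ℝ | ∃ β : Fin p → ℝ,
        lam * topSum k β ≤ norm2 (y - X.mulVec β) ∧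
        v = norm2 (y - X.mulVec β) + r β - lam * topSum k β} ∧
    {β : Fin p → ℝ | ∀ β' : Fin p → ℝ,
        minminObj y X k lam r β ≤ minminObj y X k lam r β'} =
      {β : Fin p → ℝ | lam * topSum k β ≤ norm2 (y - X.mulVec β) ∧
        ∀ β' : Fin p → ℝ, lam * topSum k β' ≤ norm2 (y - X.mulVec β') →
          norm2 (y - X.mulVec β) + r β - lam * topSum k β ≤
            norm2 (y - X.mulVec β') + r β' - lam * topSum k β'} :=
  minmin_robust_as_constrained_general y X lam hlam k r hr_add hr_smul hr_def
end

section
/- Let g : ℝ₊ → ℝ₊ be nonnegative and nondecreasing. Then for every β ∈ ℝ^p, Σ_{i=1}^p min{g(|βᵢ|), 1} = min over ℓ ∈ {0,1,…,p} of ( ℓ + Σ_{i=ℓ+1}^p g(|β_(i)|) ). -/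
open Finset

/-- `∑_{i=ℓ+1}^p g(|β_(i)|)`: the sum of `g` applied to the `p - ℓ` smallest
absolute values of the entries of `β`. -/
noncomputable def gTrim {p : ℕ} (g : ℝ → ℝ) (ℓ : ℕ) (β : Fin p → ℝ) : ℝ :=
  ∑ i ∈ Finset.univ.filter (fun i : Fin p => (i : ℕ) < p - ℓ), g (sortAbs β i)

/-!
Bounding `min (a i) 1` by `a i` on the first `p - ℓ` indices and by `1` on the remaining `ℓ`
shows that the clipped sum is a lower bound for every `ℓ + ∑_{i < p - ℓ} a i`. When `a` is sorted
increasingly, the terms with `a i ≤ 1` form an initial segment of some length `m`, and `ℓ = p - m`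
attains the bound.
For `a i = g (|β_(i)|)` monotonicity of `g` on `[0, ∞)` gives the sorting.
-/

section TrimmedSum

variable {p : ℕ}

theorem card_filter_not_val_lt_le (ℓ : ℕ) : #{i : Fin p | ¬ (i : ℕ) < p - ℓ} ≤ ℓ := by
  have hsplit := card_filter_add_card_filter_not (s := (univ : Finset (Fin p)))
    (p := fun i : Fin p => (i : ℕ) < p - ℓ)
  rw [Fin.card_filter_val_lt, card_univ, Fintype.card_fin] at hsplit
  omega

theorem sum_min_one_le_add_sum_filter_val_lt (a : Fin p → ℝ) (ℓ : ℕ) :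
    ∑ i, min (a i) 1 ≤ ℓ + ∑ i ∈ univ.filter (fun i : Fin p => (i : ℕ) < p - ℓ), a i := by
  rw [← sum_filter_add_sum_filter_not univ (fun i : Fin p => (i : ℕ) < p - ℓ), add_comm]
  refine add_le_add ?_ (sum_le_sum fun i _ => min_le_left _ _)
  calc ∑ i ∈ univ.filter (fun i : Fin p => ¬ (i : ℕ) < p - ℓ), min (a i) 1
      ≤ ∑ i ∈ univ.filter (fun i : Fin p => ¬ (i : ℕ) < p - ℓ), (1 : ℝ) :=
        sum_le_sum fun i _ => min_le_right _ _
    _ = #{i : Fin p | ¬ (i : ℕ) < p - ℓ} := by rw [sum_const, nsmul_one]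
    _ ≤ ℓ := by exact_mod_cast card_filter_not_val_lt_le ℓ

theorem sum_min_one_eq_add_sum_filter_val_lt_of_monotone {a : Fin p → ℝ} (ha : Monotone a) :
    ∃ ℓ ≤ p,
      ∑ i, min (a i) 1 = ℓ + ∑ i ∈ univ.filter (fun i : Fin p => (i : ℕ) < p - ℓ), a i := by
  set m := #{i | a i ≤ 1}
  have hm : m ≤ p := (card_filter_le _ _).trans (card_fin p).le
  have hsegment : univ.filter (fun i : Fin p => (i : ℕ) < m) = univ.filter (a · ≤ 1) := by
    ext i
    simpa only [mem_filter, mem_univ, true_and, m] using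
      Tuple.lt_card_le_iff_apply_le_of_monotone ha
  have hcard : #{i | ¬ a i ≤ 1} = p - m := by
    have := card_filter_add_card_filter_not (s := (univ : Finset (Fin p))) (p := (a · ≤ 1))
    rw [card_univ, Fintype.card_fin] at this
    omega
  refine ⟨p - m, Nat.sub_le p m, ?_⟩
  rw [Nat.sub_sub_self hm, hsegment, ← sum_filter_add_sum_filter_not univ (a · ≤ 1), add_comm,
    sum_congr rfl fun i hi => min_eq_left (mem_filter.mp hi).2,
    sum_congr rfl fun i hi => min_eq_right (not_le.mp (mem_filter.mp hi).2).le,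
    sum_const, nsmul_one, hcard]

theorem isLeast_sum_min_one_of_monotone {a : Fin p → ℝ} (ha : Monotone a) :
    IsLeast
      {v : ℝ | ∃ ℓ : ℕ, ℓ ≤ p ∧ v = ℓ + ∑ i ∈ univ.filter (fun i : Fin p => (i : ℕ) < p - ℓ), a i}
      (∑ i, min (a i) 1) :=
  ⟨sum_min_one_eq_add_sum_filter_val_lt_of_monotone ha, by
    rintro v ⟨ℓ, -, rfl⟩
    exact sum_min_one_le_add_sum_filter_val_lt a ℓ⟩

end TrimmedSum

theorem monotone_sortAbs {p : ℕ} (β : Fin p → ℝ) : Monotone (sortAbs β) :=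
  Tuple.monotone_sort fun j => |β j|

theorem sum_comp_sortAbs {p : ℕ} (f : ℝ → ℝ) (β : Fin p → ℝ) :
    ∑ i, f (sortAbs β i) = ∑ i, f |β i| :=
  Equiv.sum_comp (Tuple.sort fun j => |β j|) fun i => f |β i|

theorem clipped_sum_eq_min_trimmed_general {p : ℕ} (g : ℝ → ℝ)
    (hmono : MonotoneOn g (Set.Ici (0 : ℝ)))
    (β : Fin p → ℝ) :
    IsLeast {v : ℝ | ∃ ℓ : ℕ, ℓ ≤ p ∧ v = (ℓ : ℝ) + gTrim g ℓ β}
      (∑ i, min (g |β i|) 1) := by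
  have hsorted : Monotone fun i => g (sortAbs β i) := fun i j hij =>
    hmono (Set.mem_Ici.2 (abs_nonneg _)) (Set.mem_Ici.2 (abs_nonneg _)) (monotone_sortAbs β hij)
  rw [← sum_comp_sortAbs (fun x => min (g x) 1)]
  exact isLeast_sum_min_one_of_monotone hsorted

/-- for `g ≥ 0` nondecreasing, for every `β`,
`∑_{i=1}^p min{g(|βᵢ|), 1}` equals the minimum over `ℓ ∈ {0,1,…,p}` of
`ℓ + ∑_{i=ℓ+1}^p g(|β_(i)|)`. -/
theorem clipped_sum_eq_min_trimmed {p : ℕ} (g : ℝ → ℝ)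
    (hnonneg : ∀ x, 0 ≤ x → 0 ≤ g x) (hmono : MonotoneOn g (Set.Ici (0 : ℝ)))
    (β : Fin p → ℝ) :
    IsLeast {v : ℝ | ∃ ℓ : ℕ, ℓ ≤ p ∧ v = (ℓ : ℝ) + gTrim g ℓ β}
      (∑ i, min (g |β i|) 1) :=
  clipped_sum_eq_min_trimmed_general g hmono β
end

section
/- Fix y ∈ ℝⁿ, X ∈ ℝ^{n×p} and λ > 0, let ℓ ∈ {0,1,…,p}, and suppose β* is an optimal solution to (TL_{λ,ℓ}) with κ := ‖β*‖₀ < ℓ. Then β* is also an optimal solution to each of (TL_{λ,κ}), (TL_{λ,κ+1}), …, (TL_{λ,ℓ−1}), and β* is not an optimal solution to any of (TL_{λ,0}), (TL_{λ,1}), …, (TL_{λ,κ−1}). -/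
/-!
The penalty `T_k` vanishes exactly on vectors with at most `k` nonzero entries and decreases in
`k`, so for `κ ≤ j ≤ ℓ` the objectives of `(TL_{λ,j})` and `(TL_{λ,ℓ})` agree at `β*` and the
former dominates the latter everywhere.

For `j < κ`, counting shows that some coordinate `i` in the support of `β*` lies in a set of
`p - j` indices realising `T_j(β*)`. Scaling `β*_i` by `1 ± ε` changes the least-squares term by
`∓ ε g + O(ε²)`. Growing it keeps the support, so optimality for `ℓ` gives `g ≤ O(ε)`; shrinking it
lowers `T_j` by `ε |β*_i|`, a first-order gain that beats the second-order loss for small `ε`.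
-/

open Finset

/-- The trimmed Lasso penalty `T_k(β)`: sum of the `p - k` smallest `|β_i|`. -/
noncomputable def trimmedLasso {p : ℕ} (k : ℕ) (β : Fin p → ℝ) : ℝ :=
  ∑ i ∈ Finset.univ.filter (fun i : Fin p => (i : ℕ) < p - k), sortAbs β i

/-- `‖β‖₀`: the number of nonzero entries of `β`. -/
noncomputable def l0 {p : ℕ} (β : Fin p → ℝ) : ℕ :=
  (Finset.univ.filter (fun i => β i ≠ 0)).card

/-- The objective of the trimmed Lasso problem `(TL_{λ,k})`. -/
noncomputable def tlObj {n p : ℕ} (y : Fin n → ℝ) (X : Matrix (Fin n) (Fin p) ℝ)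
    (lam : ℝ) (k : ℕ) (β : Fin p → ℝ) : ℝ :=
  (1 / 2) * (∑ i, (y i - X.mulVec β i) ^ 2) + lam * trimmedLasso k β

open Matrix

theorem Fin.val_le_of_strictMono {m p : ℕ} {f : Fin m → Fin p} (hf : StrictMono f) (k : Fin m) :
    (k : ℕ) ≤ f k := by
  have hsub : (Iic k).image f ⊆ Iic (f k) := fun _ hx ↦ by
    obtain ⟨i, hi, rfl⟩ := mem_image.1 hx
    exact mem_Iic.2 (hf.monotone (mem_Iic.1 hi))
  have := card_le_card hsub
  rw [card_image_of_injective _ hf.injective, Fin.card_Iic, Fin.card_Iic] at this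
  omega

theorem Monotone.sum_filter_val_lt_card_le {M : Type*} [AddCommMonoid M] [PartialOrder M]
    [IsOrderedAddMonoid M] {p : ℕ} {g : Fin p → M} (hg : Monotone g) (S : Finset (Fin p)) :
    ∑ i : Fin p with i.val < #S, g i ≤ ∑ i ∈ S, g i := by
  have hS : #S ≤ p := by simpa using card_le_univ S
  calc ∑ i : Fin p with i.val < #S, g i = ∑ i ∈ univ.map (Fin.castLEEmb hS), g i := by
        congr 1
        ext i
        simp only [mem_filter, mem_univ, true_and, mem_map, Fin.coe_castLEEmb]
        exact ⟨fun hi ↦ ⟨⟨i, hi⟩, rfl⟩, fun ⟨k, hk⟩ ↦ hk ▸ k.2⟩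
    _ = ∑ k : Fin #S, g (Fin.castLE hS k) := sum_map _ _ _
    _ ≤ ∑ k, g (S.orderEmbOfFin rfl k) :=
        sum_le_sum fun k _ ↦
          hg (Fin.le_def.2 (Fin.val_le_of_strictMono (S.orderEmbOfFin rfl).strictMono k))
    _ = ∑ i ∈ S, g i := by
        conv_rhs => rw [← map_orderEmbOfFin_univ S rfl, sum_map]
        rfl

section TrimmedLasso

variable {p : ℕ}

theorem trimmedLasso_nonneg (k : ℕ) (β : Fin p → ℝ) : 0 ≤ trimmedLasso k β :=
  sum_nonneg fun _ _ ↦ abs_nonneg _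

theorem trimmedLasso_antitone (β : Fin p → ℝ) : Antitone fun k ↦ trimmedLasso k β :=
  fun _ _ h ↦ sum_le_sum_of_subset_of_nonneg
    (monotone_filter_right _ fun i _ (hi : (i : ℕ) < _) ↦ by omega) fun _ _ _ ↦ abs_nonneg _

theorem trimmedLasso_le_sum_abs (k : ℕ) (β : Fin p → ℝ) {S : Finset (Fin p)}
    (hS : #S = p - k) : trimmedLasso k β ≤ ∑ s ∈ S, |β s| := by
  set σ := Tuple.sort fun j ↦ |β j|
  calc trimmedLasso k β ≤ ∑ i ∈ S.map σ.symm.toEmbedding, sortAbs β i := by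
        have := (Tuple.monotone_sort fun j ↦ |β j|).sum_filter_val_lt_card_le
          (S.map σ.symm.toEmbedding)
        rwa [card_map, hS] at this
    _ = ∑ s ∈ S, |β s| := by simp [sortAbs, σ]

theorem exists_trimmedLasso_eq_sum_abs (k : ℕ) (β : Fin p → ℝ) :
    ∃ S : Finset (Fin p), #S = p - k ∧ trimmedLasso k β = ∑ s ∈ S, |β s| := by
  refine ⟨(univ.filter fun i : Fin p ↦ (i : ℕ) < p - k).map (Tuple.sort fun j ↦ |β j|).toEmbedding,
    ?_, by rw [sum_map]; rfl⟩
  rw [card_map, Fin.card_filter_val_lt]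
  omega

theorem trimmedLasso_eq_zero_of_l0_le {k : ℕ} {β : Fin p → ℝ} (h : l0 β ≤ k) :
    trimmedLasso k β = 0 := by
  have hzeros : p - k ≤ #{i | β i = 0} := by
    have := card_filter_add_card_filter_not (s := univ) fun i : Fin p ↦ β i = 0
    simp only [card_univ, Fintype.card_fin] at this
    unfold l0 at h
    simp only [ne_eq] at h
    omega
  obtain ⟨S, hSzero, hS⟩ := exists_subset_card_eq hzeros
  refine le_antisymm ?_ (trimmedLasso_nonneg k β)
  calc trimmedLasso k β ≤ ∑ s ∈ S, |β s| := trimmedLasso_le_sum_abs k β hS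
    _ = 0 := sum_eq_zero fun s hs ↦ by simpa using (mem_filter.1 (hSzero hs)).2

theorem l0_add_smul_single_self {β : Fin p → ℝ} {t : ℝ} (ht : 1 + t ≠ 0) (i : Fin p) :
    l0 (β + t • Pi.single i (β i)) = l0 β := by
  unfold l0
  congr 1
  ext s
  rcases eq_or_ne s i with rfl | hs
  · simp [show β s + t * β s = (1 + t) * β s by ring, ht]
  · simp [hs]

theorem sum_abs_add_smul_single_self {β : Fin p → ℝ} {t : ℝ} (ht : 0 ≤ 1 + t) {i : Fin p}
    {S : Finset (Fin p)} (hi : i ∈ S) :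
    ∑ s ∈ S, |(β + t • Pi.single i (β i) : Fin p → ℝ) s| = ∑ s ∈ S, |β s| + t * |β i| := by
  have hrest : ∑ s ∈ S.erase i, |(β + t • Pi.single i (β i) : Fin p → ℝ) s| =
      ∑ s ∈ S.erase i, |β s| :=
    sum_congr rfl fun s hs ↦ by simp [ne_of_mem_erase hs]
  rw [← add_sum_erase S _ hi, ← add_sum_erase S (fun s ↦ |β s|) hi, hrest]
  simp only [Pi.add_apply, Pi.smul_apply, Pi.single_eq_same, smul_eq_mul,
    show β i + t * β i = (1 + t) * β i by ring, abs_mul, abs_of_nonneg ht]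
  ring

end TrimmedLasso

theorem sum_sq_sub_mulVec_add_smul {m n : Type*} [Fintype m] [Fintype n] (y : m → ℝ)
    (X : Matrix m n ℝ) (β d : n → ℝ) (t : ℝ) :
    ∑ i, (y i - (X *ᵥ (β + t • d)) i) ^ 2 = ∑ i, (y i - (X *ᵥ β) i) ^ 2
      - 2 * t * ((y - X *ᵥ β) ⬝ᵥ (X *ᵥ d)) + t ^ 2 * ((X *ᵥ d) ⬝ᵥ (X *ᵥ d)) := by
  simp only [mulVec_add, mulVec_smul, dotProduct, mul_sum, ← sum_sub_distrib, ← sum_add_distrib,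
    Pi.add_apply, Pi.sub_apply, Pi.smul_apply, smul_eq_mul]
  exact sum_congr rfl fun _ _ ↦ by ring

theorem exists_pos_le_one_mul_lt {h c : ℝ} (hh : 0 ≤ h) (hc : 0 < c) :
    ∃ ε : ℝ, 0 < ε ∧ ε ≤ 1 ∧ ε * h < c := by
  refine ⟨c / (h + c), by positivity, (div_le_one (by positivity)).2 (by linarith), ?_⟩
  rw [div_mul_eq_mul_div, div_lt_iff₀ (by positivity)]
  nlinarith

section Objective

variable {n p : ℕ} (y : Fin n → ℝ) (X : Matrix (Fin n) (Fin p) ℝ) {lam : ℝ}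

theorem tlObj_add_smul (k : ℕ) (β d : Fin p → ℝ) (t : ℝ) :
    tlObj y X lam k (β + t • d) = tlObj y X lam k β - t * ((y - X *ᵥ β) ⬝ᵥ (X *ᵥ d))
      + t ^ 2 / 2 * ((X *ᵥ d) ⬝ᵥ (X *ᵥ d))
      + lam * (trimmedLasso k (β + t • d) - trimmedLasso k β) := by
  unfold tlObj
  rw [sum_sq_sub_mulVec_add_smul]
  ring

theorem tlObj_antitone (hlam : 0 ≤ lam) (β : Fin p → ℝ) : Antitone fun k ↦ tlObj y X lam k β :=
  fun _ _ h ↦ by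
    dsimp only [tlObj]
    gcongr
    exact trimmedLasso_antitone β h

theorem tlObj_eq_of_l0_le {j k : ℕ} {β : Fin p → ℝ} (hj : l0 β ≤ j) (hk : l0 β ≤ k) :
    tlObj y X lam j β = tlObj y X lam k β := by
  simp only [tlObj, trimmedLasso_eq_zero_of_l0_le hj, trimmedLasso_eq_zero_of_l0_le hk]

variable {y X}

theorem tlObj_optimal_of_l0_le_of_le (hlam : 0 ≤ lam) {ℓ j : ℕ} {βs : Fin p → ℝ}
    (hopt : ∀ β, tlObj y X lam ℓ βs ≤ tlObj y X lam ℓ β) (hj : l0 βs ≤ j) (hjℓ : j ≤ ℓ)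
    (β : Fin p → ℝ) :
    tlObj y X lam j βs ≤ tlObj y X lam j β :=
  calc tlObj y X lam j βs = tlObj y X lam ℓ βs := tlObj_eq_of_l0_le y X hj (hj.trans hjℓ)
    _ ≤ tlObj y X lam ℓ β := hopt β
    _ ≤ tlObj y X lam j β := tlObj_antitone y X hlam β hjℓ

theorem not_tlObj_optimal_of_lt_l0 (hlam : 0 < lam) {ℓ j : ℕ} {βs : Fin p → ℝ}
    (hopt : ∀ β, tlObj y X lam ℓ βs ≤ tlObj y X lam ℓ β) (hℓ : l0 βs ≤ ℓ) (hj : j < l0 βs) :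
    ¬ ∀ β, tlObj y X lam j βs ≤ tlObj y X lam j β := by
  intro hoptj
  obtain ⟨S, hS, hTS⟩ := exists_trimmedLasso_eq_sum_abs j βs
  obtain ⟨i, hiS, hi⟩ : ∃ i ∈ S, βs i ≠ 0 := by
    have hsupp : l0 βs ≤ p := (card_le_univ _).trans_eq (Fintype.card_fin p)
    obtain ⟨i, hi⟩ := inter_nonempty_of_card_lt_card_add_card (subset_univ S)
      (subset_univ {i | βs i ≠ 0})
      (by rw [card_univ, Fintype.card_fin, hS]; unfold l0 at hj hsupp; omega)
    simp only [mem_inter, mem_filter, mem_univ, true_and] at hi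
    exact ⟨i, hi⟩
  set d : Fin p → ℝ := Pi.single i (βs i)
  obtain ⟨ε, hε, hε1, hεh⟩ := exists_pos_le_one_mul_lt
    (show 0 ≤ (X *ᵥ d) ⬝ᵥ (X *ᵥ d) from sum_nonneg fun _ _ ↦ mul_self_nonneg _)
    (mul_pos hlam (abs_pos.2 hi))
  have hgrow := hopt (βs + ε • d)
  rw [tlObj_add_smul, trimmedLasso_eq_zero_of_l0_le hℓ, trimmedLasso_eq_zero_of_l0_le
    (by rwa [l0_add_smul_single_self (by linarith)])] at hgrow
  have hshrink := hoptj (βs + (-ε) • d)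
  rw [tlObj_add_smul] at hshrink
  have hpen : trimmedLasso j (βs + (-ε) • d) - trimmedLasso j βs ≤ -ε * |βs i| := by
    have := trimmedLasso_le_sum_abs j (βs + (-ε) • d) hS
    rw [sum_abs_add_smul_single_self (by linarith) hiS] at this
    linarith
  have := mul_le_mul_of_nonneg_left hpen hlam.le
  -- `hgrow + hshrink` give `0 ≤ ε (ε ‖X d‖² - λ |βs i|)`, which the choice of `ε` makes negative.
  have := mul_pos hε (sub_pos.2 hεh)
  linarith

end Objective

theorem tl_optimal_below_sparsity_general {n p : ℕ} (y : Fin n → ℝ)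
    (X : Matrix (Fin n) (Fin p) ℝ) (lam : ℝ) (hlam : 0 < lam)
    (ℓ : ℕ) (βs : Fin p → ℝ)
    (hopt : ∀ β, tlObj y X lam ℓ βs ≤ tlObj y X lam ℓ β)
    (hκ : l0 βs < ℓ) :
    (∀ j : ℕ, l0 βs ≤ j → j < ℓ →
      ∀ β, tlObj y X lam j βs ≤ tlObj y X lam j β) ∧
    (∀ j : ℕ, j < l0 βs →
      ¬ (∀ β, tlObj y X lam j βs ≤ tlObj y X lam j β)) :=
  ⟨fun _ hj hjℓ ↦ tlObj_optimal_of_l0_le_of_le hlam.le hopt hj hjℓ.le,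
    fun _ hj ↦ not_tlObj_optimal_of_lt_l0 hlam hopt hκ.le hj⟩

/-- Lemma 4.1(c): if `β*` is optimal for `(TL_{λ,ℓ})` and
`κ := ‖β*‖₀ < ℓ`, then `β*` is also optimal for each of `(TL_{λ,κ})`, …,
`(TL_{λ,ℓ-1})`, and `β*` is not optimal for any of `(TL_{λ,0})`, …,
`(TL_{λ,κ-1})`. -/
theorem tl_optimal_below_sparsity {n p : ℕ} (y : Fin n → ℝ)
    (X : Matrix (Fin n) (Fin p) ℝ) (lam : ℝ) (hlam : 0 < lam)
    (ℓ : ℕ) (hℓ : ℓ ≤ p) (βs : Fin p → ℝ)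
    (hopt : ∀ β, tlObj y X lam ℓ βs ≤ tlObj y X lam ℓ β)
    (hκ : l0 βs < ℓ) :
    (∀ j : ℕ, l0 βs ≤ j → j < ℓ →
      ∀ β, tlObj y X lam j βs ≤ tlObj y X lam j β) ∧
    (∀ j : ℕ, j < l0 βs →
      ¬ (∀ β, tlObj y X lam j βs ≤ tlObj y X lam j β)) :=
  tl_optimal_below_sparsity_general y X lam hlam ℓ βs hopt hκ
end
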